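/- Assume m = 1. If x is dominant with v(x) = e_i for some i ∈ ℤ/(n+1)ℤ (i.e. the corresponding weight is a fundamental weight, up to adding a multiple of δ), then x + 𝟙 covers x; that is, a fundamental weight λ of type A_n^{(1)} satisfies that λ + δ covers λ in the dominance order on dominant weights. -/
import Mathlib


/-- Cartan matrix of affine type `A_n^{(1)}`, indexed by `ℤ/(n+1)ℤ`:
`A i i = 2`, `A i j = -1` if `j ≡ i ± 1`, and `0` otherwise. -/
def cartanA (n : ℕ) : Matrix (ZMod (n + 1)) (ZMod (n + 1)) ℤ :=
  Matrix.of fun i j => if i = j then 2 else if j = i + 1 ∨ j = i - 1 then -1 else 0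

/-- Value of the level-`m` weight `m·ω₀ + Σᵢ xᵢ·αᵢ` on the coroot `αⱼ^∨`. -/
def vA (n : ℕ) (m : ℤ) (x : ZMod (n + 1) → ℤ) (j : ZMod (n + 1)) : ℤ :=
  m * (if j = 0 then 1 else 0) + (cartanA n).mulVec x j

/-- Dominance of the coefficient vector `x`. -/
def DomA (n : ℕ) (m : ℤ) (x : ZMod (n + 1) → ℤ) : Prop :=
  ∀ j, 0 ≤ vA n m x j

/-- `y` covers `x` in the componentwise (dominance) order on dominant vectors:
both are dominant, `x < y`, and no dominant `z` lies strictly between them. -/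
def CoversA (n : ℕ) (m : ℤ) (x y : ZMod (n + 1) → ℤ) : Prop :=
  DomA n m x ∧ DomA n m y ∧ x < y ∧ ¬∃ z, DomA n m z ∧ x < z ∧ z < y

/-- The `(n+1)`-cycle graph on `ℤ/(n+1)ℤ` (`j` adjacent to `j ± 1`). -/
def cycleG (n : ℕ) : SimpleGraph (ZMod (n + 1)) :=
  SimpleGraph.fromRel fun i j => j = i + 1

/-- An arc: a nonempty proper subset of `ℤ/(n+1)ℤ` whose induced subgraph in the
`(n+1)`-cycle is connected. -/
def IsArc (n : ℕ) (K : Set (ZMod (n + 1))) : Prop :=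
  K.Nonempty ∧ K ≠ Set.univ ∧ ((cycleG n).induce K).Connected

/-- Indicator vector `χ_K` of a subset `K`, encoding the highest root `α_K`. -/
noncomputable def chi (n : ℕ) (K : Set (ZMod (n + 1))) : ZMod (n + 1) → ℤ :=
  K.indicator 1

/-- The `i`-th standard basis vector, encoding the simple root `αᵢ`. -/
def eA (n : ℕ) (i : ZMod (n + 1)) : ZMod (n + 1) → ℤ :=
  fun j => if j = i then 1 else 0

lemma zmod_reach {n : ℕ} (P : ZMod (n+1) → Prop) (h : ∀ c, P c → P (c+1))
    {a : ZMod (n+1)} (ha : P a) : ∀ b, P b := by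
  have key : ∀ k : ℕ, P (a + k) := by
    intro k
    induction k with
    | zero => simpa using ha
    | succ k ih =>
        have := h _ ih
        have hc : ((k+1 : ℕ) : ZMod (n+1)) = (k : ZMod (n+1)) + 1 := by push_cast; ring
        rw [hc, ← add_assoc]
        exact this
  intro b
  have := key (b - a).val
  rwa [ZMod.natCast_val, ZMod.cast_id, add_sub_cancel] at this

lemma cartan_mulVec {n : ℕ} (hn : 2 ≤ n) (d : ZMod (n+1) → ℤ) (j : ZMod (n+1)) :
    (cartanA n).mulVec d j = 2 * d j - d (j+1) - d (j-1) := by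
  have h1 : (1 : ZMod (n+1)) ≠ 0 := by
    have : ((1:ℕ) : ZMod (n+1)) ≠ 0 := by
      rw [Ne, ZMod.natCast_eq_zero_iff]
      intro h; have := Nat.le_of_dvd one_pos h; omega
    simpa using this
  have h2 : (2 : ZMod (n+1)) ≠ 0 := by
    have : ((2:ℕ) : ZMod (n+1)) ≠ 0 := by
      rw [Ne, ZMod.natCast_eq_zero_iff]
      intro h; have := Nat.le_of_dvd two_pos h; omega
    simpa using this
  have e1 : j + 1 ≠ j := by
    intro h
    have h' : j + 1 = j + 0 := by simpa using h
    exact h1 (add_left_cancel h')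
  have e2 : j - 1 ≠ j := by
    intro h
    have h' : j + -1 = j + 0 := by simpa [sub_eq_add_neg] using h
    have := add_left_cancel h'
    exact h1 (by simpa using congrArg Neg.neg this)
  have e3 : j + 1 ≠ j - 1 := by
    intro h
    have h' : j + 2 = j + 0 := by
      rw [show (2:ZMod (n+1)) = 1 + 1 by ring, ← add_assoc, h]; ring
    exact h2 (add_left_cancel h')
  have key : ∀ k, cartanA n j k * d k =
      (if k = j then 2 * d k else 0) + (if k = j + 1 then -d k else 0)
        + (if k = j - 1 then -d k else 0) := by
    intro k
    by_cases hk1 : k = j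
    · subst hk1
      simp [cartanA, Ne.symm e1, Ne.symm e2]
    · by_cases hk2 : k = j + 1
      · subst hk2
        simp [cartanA, e1, e3, Ne.symm hk1]
      · by_cases hk3 : k = j - 1
        · subst hk3
          simp [cartanA, e2, Ne.symm e2, Ne.symm e3, hk1]
        · simp [cartanA, hk1, hk2, hk3, Ne.symm hk1]
  rw [Matrix.mulVec, dotProduct]
  rw [Finset.sum_congr rfl (fun k _ => key k)]
  simp [Finset.sum_add_distrib, Finset.sum_ite_eq']
  ring

/-- For `m = 1`, if `x` is dominant with `v(x) = eᵢ` for some `i`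
(a fundamental weight up to a multiple of `δ`), then `x + 𝟙` covers `x`,
i.e. `λ + δ` covers `λ`. -/
theorem stmt_11 (n : ℕ) (hn : 2 ≤ n)
    (x : ZMod (n + 1) → ℤ) (hx : DomA n 1 x)
    (i : ZMod (n + 1)) (hv : vA n 1 x = eA n i) :
    CoversA n 1 x (x + 1) := by
  refine ⟨hx, ?_, ?_, ?_⟩
  · intro j
    have h := hx j
    unfold vA at h ⊢
    rw [cartan_mulVec hn] at h
    rw [cartan_mulVec hn]
    simp only [Pi.add_apply, Pi.one_apply]
    linarith
  · rw [Pi.lt_def]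
    refine ⟨fun j => by simp, 0, by simp⟩
  · rintro ⟨z, hz, hxz, hzx1⟩
    set d : ZMod (n+1) → ℤ := fun j => z j - x j with hdset
    have hd0 : ∀ j, 0 ≤ d j := by
      intro j
      have h' : x j ≤ z j := hxz.le j
      show (0:ℤ) ≤ z j - x j
      omega
    have hd1 : ∀ j, d j ≤ 1 := by
      intro j
      have h' : z j ≤ x j + 1 := by
        have := hzx1.le j
        simpa using this
      show z j - x j ≤ 1
      omega
    have hvz : ∀ j, 0 ≤ (if j = i then (1:ℤ) else 0) + (2 * d j - d (j+1) - d (j-1)) := by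
      intro j
      have h := hz j
      have hxj := congrFun hv j
      unfold vA eA at hxj
      have hzd : z = x + d := by funext k; simp [d]
      unfold vA at h
      rw [hzd, Matrix.mulVec_add] at h
      simp only [Pi.add_apply] at h
      rw [cartan_mulVec hn x, cartan_mulVec hn d] at h
      rw [cartan_mulVec hn x] at hxj
      linarith
    obtain ⟨a0, ha0⟩ := (Pi.lt_def.mp hxz).2
    have ha : d a0 = 1 := by
      have h1 : z a0 - x a0 ≤ 1 := hd1 a0
      show z a0 - x a0 = 1
      omega
    obtain ⟨b0, hb0⟩ := (Pi.lt_def.mp hzx1).2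
    have hb : d b0 = 0 := by
      have h0 : (0:ℤ) ≤ z b0 - x b0 := hd0 b0
      have h1 : z b0 < x b0 + 1 := by simpa using hb0
      show z b0 - x b0 = 0
      omega
    have hdesc : ∃ c, d c = 1 ∧ d (c+1) = 0 := by
      by_contra hcon
      push_neg at hcon
      have step : ∀ c, d c = 1 → d (c+1) = 1 := by
        intro c hc
        have := hcon c hc
        have := hd0 (c+1); have := hd1 (c+1); omega
      have := zmod_reach _ step ha b0
      omega
    have hasc : ∃ c, d c = 0 ∧ d (c+1) = 1 := by
      by_contra hcon
      push_neg at hcon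
      have step : ∀ c, d c = 0 → d (c+1) = 0 := by
        intro c hc
        have := hcon c hc
        have := hd0 (c+1); have := hd1 (c+1); omega
      have := zmod_reach _ step hb a0
      omega
    obtain ⟨c, hc1, hc0⟩ := hdesc
    obtain ⟨c', hc'0, hc'1⟩ := hasc
    have H1 := hvz (c+1)
    have H2 := hvz c'
    rw [add_sub_cancel_right] at H1
    have hci : c + 1 = i := by
      by_contra h
      rw [if_neg h, hc0, hc1] at H1
      have := hd0 (c+1+1); omega
    have hc'i : c' = i := by
      by_contra h
      rw [if_neg h, hc'0, hc'1] at H2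
      have := hd0 (c'-1); omega
    have hcc : c = i - 1 := by rw [← hci]; ring
    have hD : d (c' - 1) = 1 := by rw [hc'i, ← hcc]; exact hc1
    rw [if_pos hc'i, hc'0, hc'1, hD] at H2
    norm_num at H2
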